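/- For every even m ≥ 0, ⟨y_m λ, α_1^∨⟩ = q_m > 0 and r_1 · (y_m λ) = y_{m−1} λ for m ≥ 2; for every odd m, ⟨y_m λ, α_2^∨⟩ = q_m > 0 and r_2 · (y_m λ) = y_{m−1} λ. -/
import Mathlib

def pseq (a b : ℤ) : ℕ → ℤ
  | 0 => 1
  | 1 => 1
  | m + 2 => (if m % 2 = 0 then b else a) * pseq a b (m + 1) - pseq a b m

def qseq (a b : ℤ) : ℕ → ℤ
  | 0 => 1
  | 1 => 1
  | m + 2 => (if m % 2 = 0 then a else b) * qseq a b (m + 1) - qseq a b m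

/-- Simple reflection r₁ on the weight lattice, in the basis (Λ₁, Λ₂). -/
def r1 (b : ℤ) (w : ℤ × ℤ) : ℤ × ℤ := (-w.1, b * w.1 + w.2)

/-- Simple reflection r₂ on the weight lattice, in the basis (Λ₁, Λ₂). -/
def r2 (a : ℤ) (w : ℤ × ℤ) : ℤ × ℤ := (w.1 + a * w.2, -w.2)

/-- `xl a b m = x_m · λ` where `x_{2k} = (r₂r₁)^k`, `x_{2k+1} = r₁(r₂r₁)^k`, `λ = Λ₁ - Λ₂`. -/
def xl (a b : ℤ) : ℕ → ℤ × ℤ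
  | 0 => (1, -1)
  | m + 1 => if m % 2 = 0 then r1 b (xl a b m) else r2 a (xl a b m)

/-- `yl a b m = y_m · λ` where `y_{2k} = (r₁r₂)^k`, `y_{2k+1} = r₂(r₁r₂)^k`, `λ = Λ₁ - Λ₂`. -/
def yl (a b : ℤ) : ℕ → ℤ × ℤ
  | 0 => (1, -1)
  | m + 1 => if m % 2 = 0 then r2 a (yl a b m) else r1 b (yl a b m)

/-- `xInv a b m` is the inverse `x_m⁻¹` as a map on the weight lattice. -/
def xInv (a b : ℤ) : ℕ → ℤ × ℤ → ℤ × ℤ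
  | 0 => id
  | m + 1 => (xInv a b m) ∘ (if m % 2 = 0 then r1 b else r2 a)

/-- `yInv a b m` is the inverse `y_m⁻¹` as a map on the weight lattice. -/
def yInv (a b : ℤ) : ℕ → ℤ × ℤ → ℤ × ℤ
  | 0 => id
  | m + 1 => (yInv a b m) ∘ (if m % 2 = 0 then r2 a else r1 b)

lemma qseq_pos_mono (a b : ℤ) (ha : 2 ≤ a) (hb : 2 ≤ b) :
    ∀ m : ℕ, 0 < qseq a b m ∧ qseq a b m ≤ qseq a b (m + 1) := by
  intro m
  induction m with
  | zero => simp [qseq]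
  | succ n ih =>
    obtain ⟨h1, h2⟩ := ih
    have h1' : 0 < qseq a b (n + 1) := lt_of_lt_of_le h1 h2
    refine ⟨h1', ?_⟩
    show qseq a b (n + 1) ≤ (if n % 2 = 0 then a else b) * qseq a b (n + 1) - qseq a b n
    have hc : 2 ≤ (if n % 2 = 0 then a else b) := by split <;> assumption
    nlinarith

lemma yl_eq (a b : ℤ) : ∀ m : ℕ,
    yl a b m = if m % 2 = 0 then (qseq a b m, -qseq a b (m + 1))
      else (-qseq a b (m + 1), qseq a b m) := by
  intro m
  induction m with
  | zero => simp [yl, qseq]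
  | succ n ih =>
    rcases Nat.even_or_odd n with he | ho
    · have h0 : n % 2 = 0 := Nat.even_iff.mp he
      have h1 : (n + 1) % 2 = 1 := by omega
      show (if n % 2 = 0 then r2 a (yl a b n) else r1 b (yl a b n)) = _
      rw [ih]
      simp only [h0, h1, if_pos rfl, one_ne_zero, if_false]
      show r2 a (qseq a b n, -qseq a b (n + 1)) = _
      have : qseq a b (n + 2) = (if n % 2 = 0 then a else b) * qseq a b (n + 1) - qseq a b n :=
        rfl
      rw [this, h0]
      simp [r2, Prod.ext_iff]; ring
    · have h0 : n % 2 = 1 := Nat.odd_iff.mp ho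
      have h1 : (n + 1) % 2 = 0 := by omega
      show (if n % 2 = 0 then r2 a (yl a b n) else r1 b (yl a b n)) = _
      rw [ih]
      simp only [h0, h1, one_ne_zero, if_false, if_pos rfl]
      show r1 b (-qseq a b (n + 1), qseq a b n) = _
      have : qseq a b (n + 2) = (if n % 2 = 0 then a else b) * qseq a b (n + 1) - qseq a b n :=
        rfl
      rw [this, h0]
      simp [r1, Prod.ext_iff]; ring

lemma r1_invol (b : ℤ) (w : ℤ × ℤ) : r1 b (r1 b w) = w := by
  simp [r1]

lemma r2_invol (a : ℤ) (w : ℤ × ℤ) : r2 a (r2 a w) = w := by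
  simp [r2]

theorem stmt10 (a b : ℤ) (ha : 2 ≤ a) (hb : 2 ≤ b) (hab : 4 < a * b) :
    ∀ m : ℕ,
      (Even m → (yl a b m).1 = qseq a b m ∧ 0 < qseq a b m ∧
        (2 ≤ m → r1 b (yl a b m) = yl a b (m - 1))) ∧
      (Odd m → (yl a b m).2 = qseq a b m ∧ 0 < qseq a b m ∧
        r2 a (yl a b m) = yl a b (m - 1)) := by
  intro m
  have hpos := (qseq_pos_mono a b ha hb m).1
  constructor
  · intro he
    have h0 : m % 2 = 0 := Nat.even_iff.mp he
    refine ⟨by rw [yl_eq, if_pos h0], hpos, ?_⟩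
    intro hm
    obtain ⟨n, rfl⟩ : ∃ n, m = n + 1 := ⟨m - 1, by omega⟩
    have hn : n % 2 = 1 := by omega
    have : yl a b (n + 1) = r1 b (yl a b n) := by
      show (if n % 2 = 0 then r2 a (yl a b n) else r1 b (yl a b n)) = _
      rw [hn]; simp
    rw [this, r1_invol]; rfl
  · intro ho
    have h0 : m % 2 = 1 := Nat.odd_iff.mp ho
    refine ⟨by rw [yl_eq, h0]; simp, hpos, ?_⟩
    obtain ⟨n, rfl⟩ : ∃ n, m = n + 1 := ⟨m - 1, by omega⟩
    have hn : n % 2 = 0 := by omega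
    have : yl a b (n + 1) = r2 a (yl a b n) := by
      show (if n % 2 = 0 then r2 a (yl a b n) else r1 b (yl a b n)) = _
      rw [hn]; simp
    rw [this, r2_invol]; rfl
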